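/- arXiv:1503.02358 — 4 statements merged into one kernel-verified Lean document; each statement's English description precedes it below -/
import Mathlib

section
/- Let a > ε > 0 and p < 1 (p may be any real, including 0 and negative values). Define h(λ) = M_p(a, a-ε, λ) + M_p(a, a+ε, λ) for λ ∈ [0,1], where M_p is the p-mean. Then for every λ ∈ (0,1), h(λ) < 2a. -/
noncomputable def Mp (p a b lam : ℝ) : ℝ :=
  if p = 0 then a ^ (1 - lam) * b ^ lam
  else ((1 - lam) * a ^ p + lam * b ^ p) ^ (1 / p)

lemma geom_lt_arith {a b lam : ℝ} (ha : 0 < a) (hb : 0 < b) (hab : a ≠ b)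
    (h0 : 0 < lam) (h1 : lam < 1) :
    a ^ (1 - lam) * b ^ lam < (1 - lam) * a + lam * b := by
  have hlog : (1 - lam) * Real.log a + lam * Real.log b
      < Real.log ((1 - lam) * a + lam * b) := by
    have := strictConcaveOn_log_Ioi.2 (Set.mem_Ioi.2 ha) (Set.mem_Ioi.2 hb) hab
      (show (0:ℝ) < 1 - lam by linarith) h0 (by ring)
    simpa [smul_eq_mul] using this
  have hsum : 0 < (1 - lam) * a + lam * b := by nlinarith
  calc a ^ (1 - lam) * b ^ lam
      = Real.exp ((1 - lam) * Real.log a + lam * Real.log b) := by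
        rw [Real.rpow_def_of_pos ha, Real.rpow_def_of_pos hb, ← Real.exp_add,
          mul_comm (Real.log a), mul_comm (Real.log b)]
    _ < Real.exp (Real.log ((1 - lam) * a + lam * b)) := Real.exp_lt_exp.2 hlog
    _ = (1 - lam) * a + lam * b := Real.exp_log hsum

lemma Mp_lt_arith {p a b lam : ℝ} (ha : 0 < a) (hb : 0 < b) (hab : a ≠ b)
    (hp : p < 1) (h0 : 0 < lam) (h1 : lam < 1) :
    Mp p a b lam < (1 - lam) * a + lam * b := by
  rcases lt_trichotomy p 0 with hneg | rfl | hpos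
  · -- p < 0 : Mp ≤ geometric mean < arithmetic mean
    rw [Mp, if_neg hneg.ne]
    set G := a ^ (1 - lam) * b ^ lam with hG
    have hGpos : 0 < G := by positivity
    have hgm : (a ^ p) ^ (1 - lam) * (b ^ p) ^ lam
        ≤ (1 - lam) * a ^ p + lam * b ^ p :=
      Real.geom_mean_le_arith_mean2_weighted (by linarith) h0.le
        (Real.rpow_pos_of_pos ha p).le (Real.rpow_pos_of_pos hb p).le (by ring)
    have hGp : G ^ p = (a ^ p) ^ (1 - lam) * (b ^ p) ^ lam := by
      rw [hG, Real.mul_rpow (by positivity) (by positivity),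
        ← Real.rpow_mul ha.le, ← Real.rpow_mul hb.le,
        ← Real.rpow_mul ha.le, ← Real.rpow_mul hb.le, mul_comm p (1 - lam),
        mul_comm p lam]
    have hkey : ((1 - lam) * a ^ p + lam * b ^ p) ^ (1 / p) ≤ G := by
      have h2 : ((1 - lam) * a ^ p + lam * b ^ p) ^ (1 / p)
          ≤ (G ^ p) ^ (1 / p) :=
        Real.rpow_le_rpow_of_nonpos (Real.rpow_pos_of_pos hGpos p)
          (by rw [hGp]; exact hgm) (by
            have : 1 / p < 0 := div_neg_of_pos_of_neg one_pos hneg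
            linarith)
      rwa [← Real.rpow_mul hGpos.le, mul_one_div_cancel hneg.ne, Real.rpow_one] at h2
    exact hkey.trans_lt (geom_lt_arith ha hb hab h0 h1)
  · rw [Mp, if_pos rfl]
    exact geom_lt_arith ha hb hab h0 h1
  · -- 0 < p < 1 : strict concavity of x ↦ x^p
    rw [Mp, if_neg hpos.ne']
    have hconc : (1 - lam) * a ^ p + lam * b ^ p
        < ((1 - lam) * a + lam * b) ^ p := by
      have := (Real.strictConcaveOn_rpow hpos hp).2 (Set.mem_Ici.2 ha.le)
        (Set.mem_Ici.2 hb.le) hab (show (0:ℝ) < 1 - lam by linarith) h0 (by ring)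
      simpa [smul_eq_mul] using this
    have hsum : 0 < (1 - lam) * a + lam * b := by nlinarith
    have h2 : ((1 - lam) * a ^ p + lam * b ^ p) ^ (1 / p)
        < (((1 - lam) * a + lam * b) ^ p) ^ (1 / p) :=
      Real.rpow_lt_rpow (by nlinarith [Real.rpow_pos_of_pos ha p,
        Real.rpow_pos_of_pos hb p]) hconc (by positivity)
    rwa [← Real.rpow_mul hsum.le, mul_one_div_cancel hpos.ne', Real.rpow_one] at h2

theorem h_lt_two_a (a ε p : ℝ) (hε : 0 < ε) (hεa : ε < a) (hp : p < 1) :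
    ∀ lam ∈ Set.Ioo (0 : ℝ) 1,
      Mp p a (a - ε) lam + Mp p a (a + ε) lam < 2 * a := by
  rintro lam ⟨h0, h1⟩
  have h₁ : Mp p a (a - ε) lam < (1 - lam) * a + lam * (a - ε) :=
    Mp_lt_arith (by linarith) (by linarith) (by intro h; linarith) hp h0 h1
  have h₂ : Mp p a (a + ε) lam < (1 - lam) * a + lam * (a + ε) :=
    Mp_lt_arith (by linarith) (by linarith) (by intro h; linarith) hp h0 h1
  nlinarith
end

section
/- Let a > ε > 0, p < 1, and h(λ) = M_p(a, a-ε, λ) + M_p(a, a+ε, λ). Then h is smooth on (0,1), h(0) = h(1) = 2a, and h''(λ) > 0 for λ ∈ (0,1). -/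
open Real Set Filter Topology

private lemma hasDerivAt_affine_rpow (c d q x : ℝ) (hx : 0 < c + d * x) :
    HasDerivAt (fun t => (c + d * t) ^ q) (d * q * (c + d * x) ^ (q - 1)) x := by
  have h1 : HasDerivAt (fun t => c + d * t) d x := by
    simpa using ((hasDerivAt_id x).const_mul d).const_add c
  exact h1.rpow_const (Or.inl hx.ne')

private lemma rpow_base_inj {x y : ℝ} (p : ℝ) (hx : 0 < x) (hy : 0 < y) (hp : p ≠ 0)
    (h : x ^ p = y ^ p) : x = y := by
  have h2 := congrArg (· ^ (1 / p)) h
  simpa [← Real.rpow_mul hx.le, ← Real.rpow_mul hy.le, mul_one_div, div_self hp,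
    mul_inv_cancel₀ hp] using h2

private lemma sq_pos' {d : ℝ} (hd : d ≠ 0) : 0 < d ^ 2 := by
  rcases hd.lt_or_gt with h | h <;> nlinarith

private lemma aux_rpow (c₁ d₁ c₂ d₂ q : ℝ) (hqq : 0 < q * (q - 1)) (hd₁ : d₁ ≠ 0)
    (hd₂ : d₂ ≠ 0)
    (hpos : ∀ x ∈ Ioo (0 : ℝ) 1, 0 < c₁ + d₁ * x ∧ 0 < c₂ + d₂ * x) :
    ContDiffOn ℝ (⊤ : ℕ∞) (fun x => (c₁ + d₁ * x) ^ q + (c₂ + d₂ * x) ^ q) (Ioo 0 1) ∧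
      ∀ lam ∈ Ioo (0 : ℝ) 1,
        0 < deriv (deriv (fun x => (c₁ + d₁ * x) ^ q + (c₂ + d₂ * x) ^ q)) lam := by
  set G : ℝ → ℝ := fun x => (c₁ + d₁ * x) ^ q + (c₂ + d₂ * x) ^ q with hG
  set U : Set ℝ := {x | 0 < c₁ + d₁ * x ∧ 0 < c₂ + d₂ * x} with hU
  have hUopen : IsOpen U := by
    have : U = ((fun x => c₁ + d₁ * x) ⁻¹' Ioi 0) ∩ ((fun x => c₂ + d₂ * x) ⁻¹' Ioi 0) := by
      ext x; simp [hU]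
    rw [this]
    exact ((isOpen_Ioi.preimage (by continuity)).inter (isOpen_Ioi.preimage (by continuity)))
  have hsub : Ioo (0 : ℝ) 1 ⊆ U := fun x hx => hpos x hx
  constructor
  · intro x hx
    have hx1 := (hpos x hx).1
    have hx2 := (hpos x hx).2
    have haff1 : ContDiffAt ℝ (⊤ : ℕ∞) (fun t : ℝ => c₁ + d₁ * t) x := by fun_prop
    have haff2 : ContDiffAt ℝ (⊤ : ℕ∞) (fun t : ℝ => c₂ + d₂ * t) x := by fun_prop
    have h1 : ContDiffAt ℝ (⊤ : ℕ∞) (fun t : ℝ => (c₁ + d₁ * t) ^ q) x :=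
      by have := (Real.contDiffAt_rpow_const_of_ne (p := q) (n := (⊤ : ℕ∞)) hx1.ne').comp x haff1; exact this
    have h2 : ContDiffAt ℝ (⊤ : ℕ∞) (fun t : ℝ => (c₂ + d₂ * t) ^ q) x :=
      by have := (Real.contDiffAt_rpow_const_of_ne (p := q) (n := (⊤ : ℕ∞)) hx2.ne').comp x haff2; exact this
    exact (h1.add h2).contDiffWithinAt
  · intro lam hlam
    set g : ℝ → ℝ := fun x =>
      d₁ * q * (c₁ + d₁ * x) ^ (q - 1) + d₂ * q * (c₂ + d₂ * x) ^ (q - 1) with hg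
    have hder : ∀ x ∈ U, HasDerivAt G (g x) x := fun x hx =>
      (hasDerivAt_affine_rpow c₁ d₁ q x hx.1).add (hasDerivAt_affine_rpow c₂ d₂ q x hx.2)
    have hmem : U ∈ 𝓝 lam := hUopen.mem_nhds (hsub hlam)
    have heq : deriv G =ᶠ[𝓝 lam] g :=
      eventually_of_mem hmem fun x hx => (hder x hx).deriv
    rw [heq.deriv_eq]
    have hl1 := (hpos lam hlam).1
    have hl2 := (hpos lam hlam).2
    have hg1 : HasDerivAt g
        (d₁ * q * (d₁ * (q - 1) * (c₁ + d₁ * lam) ^ (q - 1 - 1)) +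
         d₂ * q * (d₂ * (q - 1) * (c₂ + d₂ * lam) ^ (q - 1 - 1))) lam := by
      exact ((hasDerivAt_affine_rpow c₁ d₁ (q - 1) lam hl1).const_mul (d₁ * q)).add
        ((hasDerivAt_affine_rpow c₂ d₂ (q - 1) lam hl2).const_mul (d₂ * q))
    rw [hg1.deriv]
    have hX1 : 0 < (c₁ + d₁ * lam) ^ (q - 1 - 1) := Real.rpow_pos_of_pos hl1 _
    have hX2 : 0 < (c₂ + d₂ * lam) ^ (q - 1 - 1) := Real.rpow_pos_of_pos hl2 _
    have key : d₁ * q * (d₁ * (q - 1) * (c₁ + d₁ * lam) ^ (q - 1 - 1)) +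
        d₂ * q * (d₂ * (q - 1) * (c₂ + d₂ * lam) ^ (q - 1 - 1)) =
        q * (q - 1) * (d₁ ^ 2 * (c₁ + d₁ * lam) ^ (q - 1 - 1) +
          d₂ ^ 2 * (c₂ + d₂ * lam) ^ (q - 1 - 1)) := by ring
    rw [key]
    exact mul_pos hqq (add_pos (mul_pos (sq_pos' hd₁) hX1) (mul_pos (sq_pos' hd₂) hX2))

private lemma aux_exp (c₁ d₁ c₂ d₂ : ℝ) (hd₁ : d₁ ≠ 0) (hd₂ : d₂ ≠ 0) :
    ContDiff ℝ (⊤ : ℕ∞) (fun x => Real.exp (c₁ + d₁ * x) + Real.exp (c₂ + d₂ * x)) ∧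
      ∀ lam : ℝ,
        0 < deriv (deriv (fun x => Real.exp (c₁ + d₁ * x) + Real.exp (c₂ + d₂ * x))) lam := by
  set G : ℝ → ℝ := fun x => Real.exp (c₁ + d₁ * x) + Real.exp (c₂ + d₂ * x) with hG
  have haff : ∀ (c d x : ℝ), HasDerivAt (fun t : ℝ => c + d * t) d x := fun c d x => by
    simpa using ((hasDerivAt_id x).const_mul d).const_add c
  have hder : ∀ x : ℝ, HasDerivAt G (Real.exp (c₁ + d₁ * x) * d₁ + Real.exp (c₂ + d₂ * x) * d₂) x :=
    fun x => ((haff c₁ d₁ x).exp).add ((haff c₂ d₂ x).exp)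
  have hderivG : deriv G = fun x => Real.exp (c₁ + d₁ * x) * d₁ + Real.exp (c₂ + d₂ * x) * d₂ :=
    funext fun x => (hder x).deriv
  constructor
  · exact (Real.contDiff_exp.comp (by fun_prop)).add (Real.contDiff_exp.comp (by fun_prop))
  · intro lam
    rw [hderivG]
    have hg : HasDerivAt (fun x => Real.exp (c₁ + d₁ * x) * d₁ + Real.exp (c₂ + d₂ * x) * d₂)
        (Real.exp (c₁ + d₁ * lam) * d₁ * d₁ + Real.exp (c₂ + d₂ * lam) * d₂ * d₂) lam :=
      (((haff c₁ d₁ lam).exp).mul_const d₁).add (((haff c₂ d₂ lam).exp).mul_const d₂)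
    rw [hg.deriv]
    have key : Real.exp (c₁ + d₁ * lam) * d₁ * d₁ + Real.exp (c₂ + d₂ * lam) * d₂ * d₂ =
        Real.exp (c₁ + d₁ * lam) * d₁ ^ 2 + Real.exp (c₂ + d₂ * lam) * d₂ ^ 2 := by ring
    rw [key]
    exact add_pos (mul_pos (Real.exp_pos _) (sq_pos' hd₁))
      (mul_pos (Real.exp_pos _) (sq_pos' hd₂))

private lemma Mp_zero (p a b : ℝ) (ha : 0 < a) : Mp p a b 0 = a := by
  unfold Mp
  split_ifs with hp0
  · simp
  · rw [show (1 - (0:ℝ)) * a ^ p + 0 * b ^ p = a ^ p by ring, ← Real.rpow_mul ha.le,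
      mul_one_div, div_self hp0, Real.rpow_one]

private lemma Mp_one (p a b : ℝ) (hb : 0 < b) : Mp p a b 1 = b := by
  unfold Mp
  split_ifs with hp0
  · simp
  · rw [show (1 - (1:ℝ)) * a ^ p + 1 * b ^ p = b ^ p by ring, ← Real.rpow_mul hb.le,
      mul_one_div, div_self hp0, Real.rpow_one]

theorem h_smooth_convex (a ε p : ℝ) (hε : 0 < ε) (hεa : ε < a) (hp : p < 1) :
    let h : ℝ → ℝ := fun lam => Mp p a (a - ε) lam + Mp p a (a + ε) lam
    ContDiffOn ℝ (⊤ : ℕ∞) h (Set.Ioo 0 1) ∧ h 0 = 2 * a ∧ h 1 = 2 * a ∧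
      ∀ lam ∈ Set.Ioo (0 : ℝ) 1, deriv (deriv h) lam > 0 := by
  intro h
  have ha : 0 < a := hε.trans hεa
  have hb1 : 0 < a - ε := by linarith
  have hb2 : 0 < a + ε := by linarith
  have hbd : h 0 = 2 * a ∧ h 1 = 2 * a := by
    constructor
    · show Mp p a (a - ε) 0 + Mp p a (a + ε) 0 = 2 * a
      rw [Mp_zero p a _ ha, Mp_zero p a _ ha]; ring
    · show Mp p a (a - ε) 1 + Mp p a (a + ε) 1 = 2 * a
      rw [Mp_one p a _ hb1, Mp_one p a _ hb2]; ring
  by_cases hp0 : p = 0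
  · -- geometric mean case
    have hEq : h = fun lam => Real.exp (Real.log a + (Real.log (a - ε) - Real.log a) * lam) +
        Real.exp (Real.log a + (Real.log (a + ε) - Real.log a) * lam) := by
      funext lam
      show Mp p a (a - ε) lam + Mp p a (a + ε) lam = _
      unfold Mp
      rw [if_pos hp0, if_pos hp0]
      rw [Real.rpow_def_of_pos ha, Real.rpow_def_of_pos hb1, Real.rpow_def_of_pos hb2,
        ← Real.exp_add, ← Real.exp_add]
      congr 1 <;> · congr 1; ring
    have hd₁ : Real.log (a - ε) - Real.log a ≠ 0 := by
      have := Real.log_lt_log hb1 (by linarith : a - ε < a)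
      linarith
    have hd₂ : Real.log (a + ε) - Real.log a ≠ 0 := by
      have := Real.log_lt_log ha (by linarith : a < a + ε)
      linarith
    obtain ⟨hc, hdd⟩ := aux_exp (Real.log a) (Real.log (a - ε) - Real.log a)
      (Real.log a) (Real.log (a + ε) - Real.log a) hd₁ hd₂
    refine ⟨?_, hbd.1, hbd.2, ?_⟩
    · rw [hEq]; exact hc.contDiffOn
    · intro lam _; rw [hEq]; exact hdd lam
  · -- power mean case
    have hEq : h = fun lam => (a ^ p + ((a - ε) ^ p - a ^ p) * lam) ^ (1 / p) +
        (a ^ p + ((a + ε) ^ p - a ^ p) * lam) ^ (1 / p) := by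
      funext lam
      show Mp p a (a - ε) lam + Mp p a (a + ε) lam = _
      unfold Mp
      rw [if_neg hp0, if_neg hp0]
      congr 1 <;> · congr 1; ring
    have hap : 0 < a ^ p := Real.rpow_pos_of_pos ha p
    have hb1p : 0 < (a - ε) ^ p := Real.rpow_pos_of_pos hb1 p
    have hb2p : 0 < (a + ε) ^ p := Real.rpow_pos_of_pos hb2 p
    have hqq : 0 < (1 / p) * (1 / p - 1) := by
      have hp2 : (0:ℝ) < p ^ 2 := sq_pos' hp0
      have h2 : (1 / p) * (1 / p - 1) = (1 - p) / p ^ 2 := by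
        rw [eq_div_iff (ne_of_gt hp2)]
        field_simp
      rw [h2]
      exact div_pos (by linarith) hp2
    have hd₁ : (a - ε) ^ p - a ^ p ≠ 0 := by
      intro hcon
      have : (a - ε) ^ p = a ^ p := by linarith
      have := rpow_base_inj p hb1 ha hp0 this
      linarith
    have hd₂ : (a + ε) ^ p - a ^ p ≠ 0 := by
      intro hcon
      have : (a + ε) ^ p = a ^ p := by linarith
      have := rpow_base_inj p hb2 ha hp0 this
      linarith
    have hpos : ∀ x ∈ Ioo (0 : ℝ) 1,
        0 < a ^ p + ((a - ε) ^ p - a ^ p) * x ∧ 0 < a ^ p + ((a + ε) ^ p - a ^ p) * x := by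
      intro x hx
      obtain ⟨hx0, hx1⟩ := hx
      constructor <;> nlinarith
    obtain ⟨hc, hdd⟩ := aux_rpow (a ^ p) ((a - ε) ^ p - a ^ p) (a ^ p) ((a + ε) ^ p - a ^ p)
      (1 / p) hqq hd₁ hd₂ hpos
    refine ⟨?_, hbd.1, hbd.2, ?_⟩
    · rw [hEq]; exact hc
    · intro lam hlam; rw [hEq]; exact hdd lam hlam
end

section
/- For every q ∈ (0,1), the pinching constant β(q) = 2(1 - √(1 - √(1-q²)))/√(1-q²) - 1 satisfies β(q) > (1-q)/(1+q). -/
theorem pinching_gt (q : ℝ) (hq : q ∈ Set.Ioo (0 : ℝ) 1) :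
    2 * ((1 - Real.sqrt (1 - Real.sqrt (1 - q ^ 2))) / Real.sqrt (1 - q ^ 2)) - 1
      > (1 - q) / (1 + q) := by
  obtain ⟨hq0, hq1⟩ := hq
  have ha : (0:ℝ) < 1 - q ^ 2 := by nlinarith
  set τ := Real.sqrt (1 - q ^ 2) with hτ
  have hτ0 : 0 < τ := Real.sqrt_pos.mpr ha
  have hτsq : τ ^ 2 = 1 - q ^ 2 := Real.sq_sqrt ha.le
  have hτ1 : τ < 1 := by nlinarith
  set s := Real.sqrt (1 - τ) with hs
  have hs0 : 0 ≤ s := Real.sqrt_nonneg _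
  have hssq : s ^ 2 = 1 - τ := Real.sq_sqrt (by linarith)
  have hsq : s < q := by nlinarith
  have h1s : 0 < 1 - s := by nlinarith
  have hτeq : τ = (1 - s) * (1 + s) := by nlinarith
  have hkey : (1 - s) / τ = 1 / (1 + s) := by
    rw [hτeq]; field_simp
  rw [hkey, gt_iff_lt, div_lt_iff₀ (by linarith : (0:ℝ) < 1 + q)]
  have h1s' : 0 < 1 + s := by linarith
  rw [div_eq_inv_mul]
  have : (1 + s)⁻¹ * 1 = (1 + s)⁻¹ := by ring
  have hinv : 0 < (1 + s)⁻¹ := by positivity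
  have hmul : (1 + s) * (1 + s)⁻¹ = 1 := mul_inv_cancel₀ (by linarith)
  nlinarith [hmul, hinv, hsq]
end

section
/- Let q ∈ (0,1) and suppose λ₁ ≥ λ₂ > 0 with λ₂ ≥ β(q)λ₁ where β(q) = 2(1 - √(1 - √(1-q²)))/√(1-q²) - 1. Set H = λ₁ + λ₂ and K = λ₁λ₂. Then (16/q²)K² + (1 - 1/q²)H⁴ ≥ 0. -/
/-!
With `s = √(1 - q²)`, the claim is `16 K² ≥ s² H⁴`, i.e. `s H² ≤ 4 K`. As a quadratic form in
`(λ₁, λ₂)` the difference `4 K - s H²` vanishes on the lines `λ₂ = ρ λ₁` for the two roots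
`ρ = (2 - s ∓ 2√(1 - s)) / s` of `s ρ² - (4 - 2s) ρ + s`. The smaller root is `β(q)` and the larger
one exceeds `1`, so the pinching condition `β(q) λ₁ ≤ λ₂ ≤ λ₁` puts `λ₂ / λ₁` between the roots.
-/

open Real

lemma sq_add_mul_le_four_mul_of_pinched {s a b : ℝ} (hs0 : 0 < s) (hs1 : s ≤ 1)
    (hb : 0 ≤ b) (hba : b ≤ a) (hpinch : (2 * ((1 - √(1 - s)) / s) - 1) * a ≤ b) :
    s * (a + b) ^ 2 ≤ 4 * (a * b) := by
  set t := √(1 - s)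
  have ht0 : 0 ≤ t := sqrt_nonneg _
  have ht : t ^ 2 = 1 - s := sq_sqrt (by linarith)
  have hlower : 0 ≤ s * b - (2 - 2 * t - s) * a := by
    have h := mul_le_mul_of_nonneg_left hpinch hs0.le
    rwa [show s * ((2 * ((1 - t) / s) - 1) * a) = (2 - 2 * t - s) * a by field_simp, ← sub_nonneg]
      at h
  have hupper : 0 ≤ (2 - s + 2 * t) * a - s * b := by nlinarith
  have hfactor : (s * b - (2 - 2 * t - s) * a) * ((2 - s + 2 * t) * a - s * b)
      = s * (4 * (a * b) - s * (a + b) ^ 2) := by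
    linear_combination (4 * a ^ 2) * ht
  have h := hfactor ▸ mul_nonneg hlower hupper
  linarith [nonneg_of_mul_nonneg_right h hs0]

lemma sq_mul_pow_four_le_of_mul_sq_le {s a b : ℝ} (hs : 0 ≤ s)
    (h : s * (a + b) ^ 2 ≤ 4 * (a * b)) : s ^ 2 * (a + b) ^ 4 ≤ 16 * (a * b) ^ 2 := by
  have := pow_le_pow_left₀ (by positivity) h 2
  linear_combination this

theorem B1_nonneg (q lam1 lam2 : ℝ) (hq : q ∈ Set.Ioo (0 : ℝ) 1)
    (h21 : lam2 ≤ lam1) (h2 : 0 < lam2)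
    (hpinch : (2 * ((1 - Real.sqrt (1 - Real.sqrt (1 - q ^ 2))) / Real.sqrt (1 - q ^ 2)) - 1)
        * lam1 ≤ lam2) :
    (16 / q ^ 2) * (lam1 * lam2) ^ 2 + (1 - 1 / q ^ 2) * (lam1 + lam2) ^ 4 ≥ 0 := by
  obtain ⟨hq0, hq1⟩ := hq
  have hqsq : q ^ 2 < 1 := by nlinarith
  set s := √(1 - q ^ 2)
  have hs : s ^ 2 = 1 - q ^ 2 := sq_sqrt (by linarith)
  have hs0 : 0 < s := sqrt_pos.mpr (by linarith)
  have hs1 : s ≤ 1 := sqrt_le_one.mpr (by linarith [sq_nonneg q])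
  have key := sq_mul_pow_four_le_of_mul_sq_le hs0.le
    (sq_add_mul_le_four_mul_of_pinched hs0 hs1 h2.le h21 hpinch)
  have hexpr : (16 / q ^ 2) * (lam1 * lam2) ^ 2 + (1 - 1 / q ^ 2) * (lam1 + lam2) ^ 4
      = (16 * (lam1 * lam2) ^ 2 - s ^ 2 * (lam1 + lam2) ^ 4) / q ^ 2 := by
    rw [hs]; field_simp; ring
  rw [hexpr, ge_iff_le]
  exact div_nonneg (by linarith) (sq_nonneg q)
end
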